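/- arXiv:1404.0461 — 4 statements merged into one kernel-verified Lean document; each statement's English description precedes it below -/
import Mathlib

section
/- Let K be a symmetric positive-definite nd×nd matrix satisfying C^{-1} t^{-1}|𝕋_t ξ|² ≤ ⟨Kξ,ξ⟩ ≤ C t^{-1}|𝕋_t ξ|² for all ξ ∈ ℝ^{nd}, where t > 0 and C ≥ 1. Then there exists C₁ ≥ 1 depending only on C, n, d such that for all z ∈ ℝ^{nd}: C₁^{-1} t^{-n²d/2} exp(−C₁ t |𝕋_t^{-1} z|²) ≤ (2π)^{-nd/2} (det K)^{-1/2} exp(−½⟨K^{-1} z, z⟩) ≤ C₁ t^{-n²d/2} exp(−C₁^{-1} t |𝕋_t^{-1} z|²). -/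
open scoped BigOperators Matrix

open Matrix


open Matrix in
lemma my_dot_nonneg {ι : Type*} [Fintype ι] {M : Matrix ι ι ℝ} (hM : M.PosSemidef)
    (x : ι → ℝ) : 0 ≤ x ⬝ᵥ M.mulVec x := by
  simpa using hM.re_dotProduct_nonneg x

open Matrix in
lemma my_dot_symm {ι : Type*} [Fintype ι] {M : Matrix ι ι ℝ} (hs : M.IsSymm)
    (x y : ι → ℝ) : y ⬝ᵥ M.mulVec x = x ⬝ᵥ M.mulVec y := by
  rw [dotProduct_mulVec, ← Matrix.mulVec_transpose, hs.eq, dotProduct_comm]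

open Matrix in
lemma my_cs {ι : Type*} [Fintype ι] {M : Matrix ι ι ℝ} (hs : M.IsSymm) (hM : M.PosSemidef)
    (x y : ι → ℝ) :
    (x ⬝ᵥ M.mulVec y)^2 ≤ (x ⬝ᵥ M.mulVec x) * (y ⬝ᵥ M.mulVec y) := by
  set qx := x ⬝ᵥ M.mulVec x with hqx
  set qy := y ⬝ᵥ M.mulVec y with hqy
  set m := x ⬝ᵥ M.mulVec y with hm
  have expand : ∀ a b : ℝ, (a • x - b • y) ⬝ᵥ M.mulVec (a • x - b • y)
      = a^2 * qx - 2*a*b*m + b^2 * qy := by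
    intro a b
    have hyx : y ⬝ᵥ M.mulVec x = m := my_dot_symm hs x y
    simp only [Matrix.mulVec_sub, Matrix.mulVec_smul, sub_dotProduct, dotProduct_sub,
      smul_dotProduct, dotProduct_smul, smul_eq_mul]
    rw [hyx, ← hqx, ← hqy, ← hm]; ring
  have hqy0 : 0 ≤ qy := my_dot_nonneg hM y
  rcases eq_or_lt_of_le hqy0 with h0 | hpos
  · have hm0 : m = 0 := by
      by_contra hm0
      have h1 := my_dot_nonneg hM ((1:ℝ) • x - ((qx+1)/(2*m)) • y)
      rw [expand] at h1
      rw [← h0] at h1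
      have : (qx + 1) / (2 * m) * m = (qx+1)/2 := by field_simp
      nlinarith [h1, this]
    rw [hm0, ← h0]
    nlinarith [my_dot_nonneg hM x]
  · have h1 := my_dot_nonneg hM (qy • x - m • y)
    rw [expand] at h1
    nlinarith [h1, hpos]

lemma my_sum_range (n : ℕ) : ∑ i ∈ Finset.range n, (2*i+1) = n^2 := by
  induction n with
  | zero => simp
  | succ m ih => rw [Finset.sum_range_succ, ih]; ring

lemma my_sum_exp (n d : ℕ) :
    ∑ p : Fin n × Fin d, (2 * (p.1:ℕ) + 1) = n^2 * d := by
  rw [Fintype.sum_prod_type]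
  simp only [Finset.sum_const, Finset.card_univ, Fintype.card_fin, smul_eq_mul]
  rw [← Finset.mul_sum, Fin.sum_univ_eq_sum_range (fun i => 2*i+1), my_sum_range]
  ring

lemma my_prod_a (n d : ℕ) (t : ℝ) :
    ∏ p : Fin n × Fin d, t ^ (2 * (p.1:ℕ) + 1) = t ^ (n^2*d) := by
  rw [Finset.prod_pow_eq_pow_sum, my_sum_exp]

lemma my_det_bounds {ι : Type*} [Fintype ι] [DecidableEq ι] {B : Matrix ι ι ℝ}
    (hB : B.IsHermitian) (c c' : ℝ) (hc : 0 ≤ c)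
    (h : ∀ v : ι → ℝ, (∑ p, (v p)^2) = 1 → c ≤ v ⬝ᵥ B.mulVec v ∧ v ⬝ᵥ B.mulVec v ≤ c') :
    c ^ (Fintype.card ι) ≤ B.det ∧ B.det ≤ c' ^ (Fintype.card ι) := by
  have hdet : B.det = ∏ i, hB.eigenvalues i := by
    have := hB.det_eq_prod_eigenvalues
    simpa using this
  have heig : ∀ i, c ≤ hB.eigenvalues i ∧ hB.eigenvalues i ≤ c' := by
    intro i
    have hv := hB.eigenvalues_eq i
    set v : ι → ℝ := ⇑(hB.eigenvectorBasis i) with hvdef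
    have hnorm : ∑ p, (v p)^2 = 1 := by
      have h1 : ‖hB.eigenvectorBasis i‖ = 1 := hB.eigenvectorBasis.orthonormal.1 i
      have h2 := EuclideanSpace.norm_eq (hB.eigenvectorBasis i)
      rw [h1] at h2
      have h3 : ∑ p, ‖hB.eigenvectorBasis i p‖^2 = 1 := by
        have := congrArg (·^2) h2.symm
        simpa [Real.sq_sqrt (Finset.sum_nonneg fun p _ => sq_nonneg _)] using this
      simpa [Real.norm_eq_abs, sq_abs] using h3
    have hv' : hB.eigenvalues i = v ⬝ᵥ B.mulVec v := by simpa using hv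
    rw [hv']
    exact h v hnorm
  refine ⟨?_, ?_⟩
  · rw [hdet]
    calc c ^ (Fintype.card ι) = ∏ _i : ι, c := by rw [Finset.prod_const, Finset.card_univ]
    _ ≤ ∏ i, hB.eigenvalues i :=
        Finset.prod_le_prod (fun i _ => hc) (fun i _ => (heig i).1)
  · rw [hdet]
    calc (∏ i, hB.eigenvalues i) ≤ ∏ _i : ι, c' :=
        Finset.prod_le_prod (fun i _ => le_trans hc (heig i).1) (fun i _ => (heig i).2)
    _ = c' ^ (Fintype.card ι) := by rw [Finset.prod_const, Finset.card_univ]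

-- main det bound for K
lemma my_detK (n d : ℕ) (C : ℝ) (hC : 1 ≤ C)
    (K : Matrix (Fin n × Fin d) (Fin n × Fin d) ℝ) (hsym : K.IsSymm)
    (t : ℝ) (ht : 0 < t)
    (hyp : ∀ ξ : Fin n × Fin d → ℝ,
      C⁻¹ * (∑ p : Fin n × Fin d, t ^ (2*(p.1:ℕ) + 1) * (ξ p) ^ 2) ≤ ξ ⬝ᵥ K.mulVec ξ ∧
      ξ ⬝ᵥ K.mulVec ξ ≤ C * (∑ p : Fin n × Fin d, t ^ (2*(p.1:ℕ) + 1) * (ξ p) ^ 2)) :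
    C⁻¹ ^ (n*d) * t ^ (n^2*d) ≤ K.det ∧ K.det ≤ C ^ (n*d) * t ^ (n^2*d) := by
  set a : Fin n × Fin d → ℝ := fun p => t ^ (2*(p.1:ℕ)+1) with ha
  have hapos : ∀ p, 0 < a p := fun p => pow_pos ht _
  set s : Fin n × Fin d → ℝ := fun p => (Real.sqrt (a p))⁻¹ with hs
  have hspos : ∀ p, 0 < s p := fun p => inv_pos.2 (Real.sqrt_pos.2 (hapos p))
  have hssq : ∀ p, (s p)^2 = (a p)⁻¹ := by
    intro p
    show ((Real.sqrt (a p))⁻¹)^2 = (a p)⁻¹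
    rw [← Real.sqrt_inv]
    exact Real.sq_sqrt (le_of_lt (inv_pos.2 (hapos p)))
  set D : Matrix (Fin n × Fin d) (Fin n × Fin d) ℝ := Matrix.diagonal s with hD
  set B := D * K * D with hB
  have hBherm : B.IsHermitian := by
    rw [Matrix.IsHermitian, Matrix.conjTranspose_eq_transpose_of_trivial, hB,
      Matrix.transpose_mul, Matrix.transpose_mul, Matrix.diagonal_transpose, hsym.eq]
    rw [Matrix.mul_assoc]
  -- quadratic form of B
  have hquad : ∀ v : Fin n × Fin d → ℝ,
      v ⬝ᵥ B.mulVec v = (fun p => s p * v p) ⬝ᵥ K.mulVec (fun p => s p * v p) := by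
    intro v
    rw [hB, ← Matrix.mulVec_mulVec, ← Matrix.mulVec_mulVec]
    have h1 : D.mulVec v = fun p => s p * v p := by
      funext p; rw [hD, Matrix.mulVec_diagonal]
    rw [h1]
    have h2 : ∀ u : Fin n × Fin d → ℝ, v ⬝ᵥ D.mulVec u = (fun p => s p * v p) ⬝ᵥ u := by
      intro u
      simp only [dotProduct, hD, Matrix.mulVec_diagonal]
      exact Finset.sum_congr rfl fun p _ => by ring
    rw [h2]
  -- bounds on B's quadratic form on unit vectors
  have hunit : ∀ v : Fin n × Fin d → ℝ, (∑ p, (v p)^2) = 1 →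
      C⁻¹ ≤ v ⬝ᵥ B.mulVec v ∧ v ⬝ᵥ B.mulVec v ≤ C := by
    intro v hv
    have h1 := hyp (fun p => s p * v p)
    have h2 : ∑ p : Fin n × Fin d, t ^ (2*(p.1:ℕ)+1) * ((s p * v p))^2 = 1 := by
      rw [← hv]
      refine Finset.sum_congr rfl fun p _ => ?_
      have e1 : (s p)^2 = (t ^ (2*(p.1:ℕ)+1))⁻¹ := hssq p
      rw [mul_pow, e1, ← mul_assoc,
        mul_inv_cancel₀ (pow_ne_zero _ (ne_of_gt ht)), one_mul]
    rw [hquad v]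
    constructor
    · calc C⁻¹ = C⁻¹ * 1 := by ring
      _ = C⁻¹ * ∑ p : Fin n × Fin d, t ^ (2*(p.1:ℕ)+1) * ((s p * v p))^2 := by rw [h2]
      _ ≤ _ := h1.1
    · calc (fun p => s p * v p) ⬝ᵥ K.mulVec (fun p => s p * v p)
          ≤ C * ∑ p : Fin n × Fin d, t ^ (2*(p.1:ℕ)+1) * ((s p * v p))^2 := h1.2
      _ = C * 1 := by rw [h2]
      _ = C := by ring
  -- apply det bounds to B
  have hC0 : (0:ℝ) < C := lt_of_lt_of_le one_pos hC
  have hcard : Fintype.card (Fin n × Fin d) = n * d := by simp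
  have hdb := my_det_bounds hBherm C⁻¹ C (le_of_lt (inv_pos.2 hC0)) hunit
  rw [hcard] at hdb
  -- det B = (t^(n^2*d))⁻¹ * det K
  have hprods : (∏ p : Fin n × Fin d, s p)^2 = (t ^ (n^2*d))⁻¹ := by
    rw [← Finset.prod_pow]
    have : ∀ p : Fin n × Fin d, (s p)^2 = (t ^ (2*(p.1:ℕ)+1))⁻¹ := hssq
    rw [Finset.prod_congr rfl (fun p _ => this p), Finset.prod_inv_distrib,
      my_prod_a n d t]
  have hdetB : B.det = (t ^ (n^2*d))⁻¹ * K.det := by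
    rw [hB, Matrix.det_mul, Matrix.det_mul, hD, Matrix.det_diagonal]
    rw [← hprods]; ring
  rw [hdetB] at hdb
  have htpow : (0:ℝ) < t ^ (n^2*d) := pow_pos ht _
  constructor
  · have := mul_le_mul_of_nonneg_left hdb.1 (le_of_lt htpow)
    calc C⁻¹ ^ (n*d) * t ^ (n^2*d) = t ^ (n^2*d) * C⁻¹ ^ (n*d) := by ring
    _ ≤ t ^ (n^2*d) * ((t ^ (n^2*d))⁻¹ * K.det) := this
    _ = K.det := by field_simp
  · have := mul_le_mul_of_nonneg_left hdb.2 (le_of_lt htpow)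
    calc K.det = t ^ (n^2*d) * ((t ^ (n^2*d))⁻¹ * K.det) := by field_simp
    _ ≤ t ^ (n^2*d) * C ^ (n*d) := this
    _ = C ^ (n*d) * t ^ (n^2*d) := by ring
lemma my_Lbound (n d : ℕ) (C : ℝ) (hC : 1 ≤ C)
    (K : Matrix (Fin n × Fin d) (Fin n × Fin d) ℝ) (hsym : K.IsSymm) (hpd : K.PosDef)
    (t : ℝ) (ht : 0 < t)
    (hyp : ∀ ξ : Fin n × Fin d → ℝ,
      C⁻¹ * (∑ p : Fin n × Fin d, t ^ (2*(p.1:ℕ) + 1) * (ξ p) ^ 2) ≤ ξ ⬝ᵥ K.mulVec ξ ∧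
      ξ ⬝ᵥ K.mulVec ξ ≤ C * (∑ p : Fin n × Fin d, t ^ (2*(p.1:ℕ) + 1) * (ξ p) ^ 2))
    (z : Fin n × Fin d → ℝ) :
    C⁻¹ * (∑ p : Fin n × Fin d, (t ^ (2*(p.1:ℕ) + 1))⁻¹ * (z p) ^ 2) ≤ z ⬝ᵥ K⁻¹.mulVec z ∧
    z ⬝ᵥ K⁻¹.mulVec z ≤ C * (∑ p : Fin n × Fin d, (t ^ (2*(p.1:ℕ) + 1))⁻¹ * (z p) ^ 2) := by
  have hC0 : (0:ℝ) < C := lt_of_lt_of_le one_pos hC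
  set Q := ∑ p : Fin n × Fin d, (t ^ (2*(p.1:ℕ) + 1))⁻¹ * (z p) ^ 2 with hQdef
  have hQ0 : 0 ≤ Q := Finset.sum_nonneg fun p _ =>
    mul_nonneg (le_of_lt (inv_pos.2 (pow_pos ht _))) (sq_nonneg _)
  have hunit : IsUnit K.det := isUnit_iff_ne_zero.2 (ne_of_gt hpd.det_pos)
  have hKK : K * K⁻¹ = 1 := Matrix.mul_nonsing_inv K hunit
  have hKK' : K⁻¹ * K = 1 := Matrix.nonsing_inv_mul K hunit
  have hinvpd : K⁻¹.PosDef := Matrix.posDef_inv_iff.2 hpd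
  set w := K⁻¹.mulVec z with hwdef
  have hKw : K.mulVec w = z := by
    rw [hwdef, Matrix.mulVec_mulVec, hKK, Matrix.one_mulVec]
  set L := z ⬝ᵥ K⁻¹.mulVec z with hLdef
  have hL0 : 0 ≤ L := my_dot_nonneg hinvpd.posSemidef z
  have hwKw : w ⬝ᵥ K.mulVec w = L := by
    rw [hKw, dotProduct_comm, hLdef, hwdef]
  -- upper bound : L ≤ C * Q
  have hupper : L ≤ C * Q := by
    have hL_eq : L = ∑ p, ((Real.sqrt (t ^ (2*(p.1:ℕ)+1)))⁻¹ * z p) *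
        ((Real.sqrt (t ^ (2*(p.1:ℕ)+1))) * w p) := by
      rw [hLdef, ← hwdef, dotProduct]
      refine Finset.sum_congr rfl fun p _ => ?_
      have h1 : (Real.sqrt (t ^ (2*(p.1:ℕ)+1)))⁻¹ * (Real.sqrt (t ^ (2*(p.1:ℕ)+1))) = 1 :=
        inv_mul_cancel₀ (ne_of_gt (Real.sqrt_pos.2 (pow_pos ht _)))
      calc z p * w p = ((Real.sqrt (t ^ (2*(p.1:ℕ)+1)))⁻¹ * (Real.sqrt (t ^ (2*(p.1:ℕ)+1))))
          * (z p * w p) := by rw [h1]; ring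
      _ = _ := by ring
    have hcs := Finset.sum_mul_sq_le_sq_mul_sq Finset.univ
      (fun p => (Real.sqrt (t ^ (2*(p.1:ℕ)+1)))⁻¹ * z p)
      (fun p => (Real.sqrt (t ^ (2*(p.1:ℕ)+1))) * w p)
    have hsq1 : ∑ p : Fin n × Fin d, ((Real.sqrt (t ^ (2*(p.1:ℕ)+1)))⁻¹ * z p)^2 = Q := by
      refine Finset.sum_congr rfl fun p _ => ?_
      rw [mul_pow, ← Real.sqrt_inv, Real.sq_sqrt (le_of_lt (inv_pos.2 (pow_pos ht _)))]
    have hsq2 : ∑ p : Fin n × Fin d, ((Real.sqrt (t ^ (2*(p.1:ℕ)+1))) * w p)^2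
        = ∑ p : Fin n × Fin d, t ^ (2*(p.1:ℕ)+1) * (w p)^2 := by
      refine Finset.sum_congr rfl fun p _ => ?_
      rw [mul_pow, Real.sq_sqrt (le_of_lt (pow_pos ht _))]
    rw [← hL_eq, hsq1, hsq2] at hcs
    -- ∑ a w² ≤ C * (w K w) = C * L
    have h2 : ∑ p : Fin n × Fin d, t ^ (2*(p.1:ℕ)+1) * (w p)^2 ≤ C * L := by
      have h3 := (hyp w).1
      rw [hwKw] at h3
      calc ∑ p : Fin n × Fin d, t ^ (2*(p.1:ℕ)+1) * (w p)^2
          = C * (C⁻¹ * ∑ p : Fin n × Fin d, t ^ (2*(p.1:ℕ)+1) * (w p)^2) := by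
            field_simp
      _ ≤ C * L := mul_le_mul_of_nonneg_left h3 (le_of_lt hC0)
    have h4 : L^2 ≤ Q * (C * L) := le_trans hcs
      (mul_le_mul_of_nonneg_left h2 hQ0)
    rcases eq_or_lt_of_le hL0 with h0 | hpos
    · rw [← h0]; exact mul_nonneg (le_of_lt hC0) hQ0
    · nlinarith [h4, hpos]
  -- lower bound : C⁻¹ * Q ≤ L, via Q ≤ C * L
  have hlower : Q ≤ C * L := by
    set y : Fin n × Fin d → ℝ := fun p => (t ^ (2*(p.1:ℕ)+1))⁻¹ * z p with hydef
    have hcs := my_cs hsym hpd.posSemidef w y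
    have hy1 : w ⬝ᵥ K.mulVec y = Q := by
      rw [my_dot_symm hsym y w, hKw, hQdef, dotProduct]
      exact Finset.sum_congr rfl fun p _ => by rw [hydef]; ring
    have hy2 : y ⬝ᵥ K.mulVec y ≤ C * Q := by
      have h3 := (hyp y).2
      have h4 : ∑ p : Fin n × Fin d, t ^ (2*(p.1:ℕ)+1) * (y p)^2 = Q := by
        rw [hQdef]
        refine Finset.sum_congr rfl fun p _ => ?_
        rw [hydef, mul_pow]
        have hne : (t:ℝ) ^ (2*(p.1:ℕ)+1) ≠ 0 := ne_of_gt (pow_pos ht _)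
        field_simp
      rw [h4] at h3
      exact h3
    rw [hy1, hwKw] at hcs
    have h5 : Q^2 ≤ L * (C * Q) := le_trans hcs (mul_le_mul_of_nonneg_left hy2 hL0)
    rcases eq_or_lt_of_le hQ0 with h0 | hpos
    · rw [← h0]; exact mul_nonneg (le_of_lt hC0) hL0
    · nlinarith [h5, hpos]
  constructor
  · calc C⁻¹ * Q ≤ C⁻¹ * (C * L) := mul_le_mul_of_nonneg_left hlower (le_of_lt (inv_pos.2 hC0))
    _ = L := by field_simp
  · exact hupper


set_option maxHeartbeats 1000000 in
/-- Two-sided multi-scale Gaussian estimate: if the covariance K satisfies the good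
scaling property, then the Gaussian density (2π)^{-nd/2}(det K)^{-1/2}exp(−½⟨K⁻¹z,z⟩)
is comparable to t^{-n²d/2}exp(−C₁^{±1} t |𝕋_t^{-1}z|²), with C₁ = C₁(C,n,d). -/
theorem stmt_4 (n d : ℕ) (hn : 1 ≤ n) (hd : 1 ≤ d) (C : ℝ) (hC : 1 ≤ C) :
    ∃ C₁ : ℝ, 1 ≤ C₁ ∧
      ∀ (K : Matrix (Fin n × Fin d) (Fin n × Fin d) ℝ), K.IsSymm → K.PosDef →
      ∀ t : ℝ, 0 < t →
      (∀ ξ : Fin n × Fin d → ℝ,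
        C⁻¹ * t⁻¹ * (∑ p : Fin n × Fin d, (t ^ ((p.1:ℕ) + 1) * ξ p) ^ 2) ≤ ξ ⬝ᵥ K.mulVec ξ ∧
        ξ ⬝ᵥ K.mulVec ξ ≤ C * t⁻¹ * (∑ p : Fin n × Fin d, (t ^ ((p.1:ℕ) + 1) * ξ p) ^ 2)) →
      ∀ z : Fin n × Fin d → ℝ,
        C₁⁻¹ * t ^ (-((n ^ 2 * d : ℕ) : ℝ) / 2) *
            Real.exp (-C₁ * t * ∑ p : Fin n × Fin d, ((t ^ ((p.1:ℕ) + 1))⁻¹ * z p) ^ 2)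
          ≤ (2 * Real.pi) ^ (-((n * d : ℕ) : ℝ) / 2) * K.det ^ (-(1:ℝ)/2) *
              Real.exp (-(1/2) * (z ⬝ᵥ K⁻¹.mulVec z)) ∧
        (2 * Real.pi) ^ (-((n * d : ℕ) : ℝ) / 2) * K.det ^ (-(1:ℝ)/2) *
              Real.exp (-(1/2) * (z ⬝ᵥ K⁻¹.mulVec z))
          ≤ C₁ * t ^ (-((n ^ 2 * d : ℕ) : ℝ) / 2) *
              Real.exp (-C₁⁻¹ * t * ∑ p : Fin n × Fin d, ((t ^ ((p.1:ℕ) + 1))⁻¹ * z p) ^ 2) := by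
  have hπ : (3:ℝ) < Real.pi := Real.pi_gt_three
  have hC0 : (0:ℝ) < C := lt_of_lt_of_le one_pos hC
  have h2πC : (1:ℝ) ≤ 2 * Real.pi * C := by nlinarith
  set C₁ : ℝ := (2 * Real.pi * C) ^ (n*d) * (2*C) with hC₁def
  have hpow1 : (1:ℝ) ≤ (2 * Real.pi * C) ^ (n*d) := one_le_pow₀ h2πC
  have hC₁1 : 1 ≤ C₁ := by nlinarith
  have hC₁0 : (0:ℝ) < C₁ := lt_of_lt_of_le one_pos hC₁1
  have h2C : 2 * C ≤ C₁ := by nlinarith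
  refine ⟨C₁, hC₁1, ?_⟩
  intro K hsym hpd t ht hyp z
  -- convert hypothesis to the "a-form"
  have hterm : ∀ (k : ℕ) (x : ℝ), t⁻¹ * (t ^ (k + 1) * x) ^ 2 = t ^ (2*k+1) * x^2 := by
    intro k x
    have h1 : (t ^ (k+1))^2 = t * t ^ (2*k+1) := by
      rw [← pow_mul, ← pow_succ']
      congr 1
      omega
    rw [mul_pow, h1]
    field_simp
  have hsum : ∀ ξ : Fin n × Fin d → ℝ,
      t⁻¹ * (∑ p : Fin n × Fin d, (t ^ ((p.1:ℕ) + 1) * ξ p) ^ 2)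
        = ∑ p : Fin n × Fin d, t ^ (2*(p.1:ℕ)+1) * (ξ p)^2 := by
    intro ξ
    rw [Finset.mul_sum]
    exact Finset.sum_congr rfl fun p _ => hterm (p.1:ℕ) (ξ p)
  have hform : ∀ ξ : Fin n × Fin d → ℝ,
      C⁻¹ * (∑ p : Fin n × Fin d, t ^ (2*(p.1:ℕ) + 1) * (ξ p) ^ 2) ≤ ξ ⬝ᵥ K.mulVec ξ ∧
      ξ ⬝ᵥ K.mulVec ξ ≤ C * (∑ p : Fin n × Fin d, t ^ (2*(p.1:ℕ) + 1) * (ξ p) ^ 2) := by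
    intro ξ
    have h := hyp ξ
    rw [mul_assoc, mul_assoc, hsum ξ] at h
    exact h
  have hdet := my_detK n d C hC K hsym t ht hform
  have hL := my_Lbound n d C hC K hsym hpd t ht hform z
  set Q := ∑ p : Fin n × Fin d, (t ^ (2*(p.1:ℕ) + 1))⁻¹ * (z p) ^ 2 with hQdef
  have hQ0 : 0 ≤ Q := Finset.sum_nonneg fun p _ =>
    mul_nonneg (le_of_lt (inv_pos.2 (pow_pos ht _))) (sq_nonneg _)
  set L := z ⬝ᵥ K⁻¹.mulVec z with hLdef
  have hL0 : 0 ≤ L := le_trans (mul_nonneg (le_of_lt (inv_pos.2 hC0)) hQ0) hL.1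
  -- t * Σ = Q
  have hQt : t * (∑ p : Fin n × Fin d, ((t ^ ((p.1:ℕ) + 1))⁻¹ * z p) ^ 2) = Q := by
    rw [hQdef, Finset.mul_sum]
    refine Finset.sum_congr rfl fun p _ => ?_
    have h1 : (t ^ ((p.1:ℕ)+1))^2 = t * t ^ (2*(p.1:ℕ)+1) := by
      rw [← pow_mul, ← pow_succ']
      congr 1
      omega
    rw [mul_pow, inv_pow, h1]
    have h2 : (t : ℝ) ^ (2*(p.1:ℕ)+1) ≠ 0 := ne_of_gt (pow_pos ht _)
    have h3 : (t : ℝ) ≠ 0 := ne_of_gt ht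
    field_simp
  -- abbreviations
  set N : ℕ := n * d with hNdef
  set N2 : ℕ := n^2 * d with hN2def
  set T : ℝ := t ^ (-((N2:ℕ) : ℝ) / 2) with hTdef
  have hT0 : 0 < T := Real.rpow_pos_of_pos ht _
  have hdet0 : 0 < K.det := hpd.det_pos
  -- rpow computations
  have hbase1 : (0:ℝ) < C⁻¹ ^ N * t ^ N2 := by positivity
  have hDk_up : K.det ^ (-(1:ℝ)/2) ≤ C ^ ((N:ℝ)/2) * T := by
    have h1 : (C⁻¹ ^ N * t ^ N2 : ℝ) ^ (-(1:ℝ)/2) ≥ K.det ^ (-(1:ℝ)/2) :=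
      Real.rpow_le_rpow_of_nonpos hbase1 hdet.1 (by norm_num)
    refine le_trans h1 (le_of_eq ?_)
    rw [Real.mul_rpow (by positivity) (by positivity)]
    congr 1
    · rw [inv_pow, ← Real.rpow_natCast C N, ← Real.rpow_neg (le_of_lt hC0),
        ← Real.rpow_mul (le_of_lt hC0)]
      congr 1
      ring
    · rw [hTdef, ← Real.rpow_natCast t N2, ← Real.rpow_mul (le_of_lt ht)]
      congr 1
      ring
  have hDk_lo : C ^ (-(N:ℝ)/2) * T ≤ K.det ^ (-(1:ℝ)/2) := by
    have h1 : (C ^ N * t ^ N2 : ℝ) ^ (-(1:ℝ)/2) ≤ K.det ^ (-(1:ℝ)/2) :=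
      Real.rpow_le_rpow_of_nonpos hdet0 hdet.2 (by norm_num)
    refine le_trans (le_of_eq ?_) h1
    rw [Real.mul_rpow (by positivity) (by positivity)]
    congr 1
    · rw [← Real.rpow_natCast C N, ← Real.rpow_mul (le_of_lt hC0)]
      congr 1
      ring
    · rw [hTdef, ← Real.rpow_natCast t N2, ← Real.rpow_mul (le_of_lt ht)]
      congr 1
      ring
  -- numeric facts about C₁
  have hCN : (C:ℝ) ^ ((N:ℝ)/2) ≤ C₁ := by
    have h1 : (C:ℝ) ^ ((N:ℝ)/2) ≤ C ^ ((N:ℝ)) :=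
      Real.rpow_le_rpow_of_exponent_le hC
        (by have : (0:ℝ) ≤ (N:ℝ) := Nat.cast_nonneg N; linarith)
    have h2 : (C:ℝ) ^ ((N:ℝ)) = C ^ N := Real.rpow_natCast C N
    have h3 : (C:ℝ) ^ N ≤ (2 * Real.pi * C) ^ N :=
      pow_le_pow_left₀ (le_of_lt hC0) (by nlinarith) N
    have h4 : ((2 * Real.pi * C) ^ N : ℝ) ≤ C₁ := by nlinarith [pow_pos (lt_of_lt_of_le one_pos h2πC) N]
    linarith [h1, h2 ▸ h1, h3]
  have hC₁inv : C₁⁻¹ ≤ (2 * Real.pi * C) ^ (-(N:ℝ)/2) := by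
    have h1 : (2 * Real.pi * C : ℝ) ^ ((N:ℝ)/2) ≤ C₁ := by
      have h2 : (2 * Real.pi * C : ℝ) ^ ((N:ℝ)/2) ≤ (2 * Real.pi * C) ^ ((N:ℝ)) :=
        Real.rpow_le_rpow_of_exponent_le h2πC
          (by have : (0:ℝ) ≤ (N:ℝ) := Nat.cast_nonneg N; linarith)
      have h3 : (2 * Real.pi * C : ℝ) ^ ((N:ℝ)) = (2 * Real.pi * C) ^ N :=
        Real.rpow_natCast _ N
      nlinarith [pow_pos (lt_of_lt_of_le one_pos h2πC) N]
    have h5 : (0:ℝ) < (2 * Real.pi * C) ^ ((N:ℝ)/2) :=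
      Real.rpow_pos_of_pos (lt_of_lt_of_le one_pos h2πC) _
    rw [show (-(N:ℝ)/2) = -((N:ℝ)/2) by ring, Real.rpow_neg (by positivity)]
    exact inv_anti₀ h5 h1
  -- rewrite exp arguments
  have hexpr1 : -C₁ * t * (∑ p : Fin n × Fin d, ((t ^ ((p.1:ℕ) + 1))⁻¹ * z p) ^ 2)
      = -(C₁ * Q) := by rw [← hQt]; ring
  have hexpr2 : -C₁⁻¹ * t * (∑ p : Fin n × Fin d, ((t ^ ((p.1:ℕ) + 1))⁻¹ * z p) ^ 2)
      = -(C₁⁻¹ * Q) := by rw [← hQt]; ring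
  rw [hexpr1, hexpr2]
  have hP0 : (0:ℝ) < (2 * Real.pi) ^ (-((N:ℕ):ℝ)/2) :=
    Real.rpow_pos_of_pos (by nlinarith) _
  constructor
  · -- lower bound
    have hcoeff : C₁⁻¹ * T ≤ (2 * Real.pi) ^ (-((N:ℕ):ℝ)/2) * K.det ^ (-(1:ℝ)/2) := by
      have h1 : C₁⁻¹ * T ≤ (2 * Real.pi * C) ^ (-(N:ℝ)/2) * T :=
        mul_le_mul_of_nonneg_right hC₁inv (le_of_lt hT0)
      have h2 : (2 * Real.pi * C : ℝ) ^ (-(N:ℝ)/2) = (2 * Real.pi) ^ (-((N:ℕ):ℝ)/2) * C ^ (-(N:ℝ)/2) :=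
        Real.mul_rpow (by positivity) (le_of_lt hC0)
      calc C₁⁻¹ * T ≤ (2 * Real.pi * C) ^ (-(N:ℝ)/2) * T := h1
      _ = (2 * Real.pi) ^ (-((N:ℕ):ℝ)/2) * (C ^ (-(N:ℝ)/2) * T) := by rw [h2]; ring
      _ ≤ (2 * Real.pi) ^ (-((N:ℕ):ℝ)/2) * K.det ^ (-(1:ℝ)/2) :=
        mul_le_mul_of_nonneg_left hDk_lo (le_of_lt hP0)
    have hexp : Real.exp (-(C₁ * Q)) ≤ Real.exp (-(1/2) * L) := by
      rw [Real.exp_le_exp]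
      have h1 : L ≤ C * Q := hL.2
      nlinarith
    calc C₁⁻¹ * T * Real.exp (-(C₁ * Q))
        ≤ ((2 * Real.pi) ^ (-((N:ℕ):ℝ)/2) * K.det ^ (-(1:ℝ)/2)) * Real.exp (-(1/2) * L) :=
          mul_le_mul hcoeff hexp (le_of_lt (Real.exp_pos _)) (by positivity)
    _ = _ := by ring
  · -- upper bound
    have hcoeff : (2 * Real.pi) ^ (-((N:ℕ):ℝ)/2) * K.det ^ (-(1:ℝ)/2) ≤ C₁ * T := by
      have hP1 : (2 * Real.pi : ℝ) ^ (-((N:ℕ):ℝ)/2) ≤ 1 :=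
        Real.rpow_le_one_of_one_le_of_nonpos (by nlinarith)
          (by have : (0:ℝ) ≤ (N:ℝ) := Nat.cast_nonneg N; linarith)
      calc (2 * Real.pi) ^ (-((N:ℕ):ℝ)/2) * K.det ^ (-(1:ℝ)/2)
          ≤ 1 * (C ^ ((N:ℝ)/2) * T) := by
            apply mul_le_mul hP1 hDk_up (by positivity) (by norm_num)
      _ = C ^ ((N:ℝ)/2) * T := by ring
      _ ≤ C₁ * T := mul_le_mul_of_nonneg_right hCN (le_of_lt hT0)
    have hexp : Real.exp (-(1/2) * L) ≤ Real.exp (-(C₁⁻¹ * Q)) := by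
      rw [Real.exp_le_exp]
      have h1 : C⁻¹ * Q ≤ L := hL.1
      have h2 : C₁⁻¹ * Q ≤ (2*C)⁻¹ * Q := by
        apply mul_le_mul_of_nonneg_right _ hQ0
        exact inv_anti₀ (by positivity) h2C
      have h3 : (2*C)⁻¹ * Q ≤ (1/2) * (C⁻¹ * Q) := by
        rw [mul_inv]
        ring_nf
        nlinarith [hQ0]
      nlinarith
    calc (2 * Real.pi) ^ (-((N:ℕ):ℝ)/2) * K.det ^ (-(1:ℝ)/2) * Real.exp (-(1/2) * L)
        ≤ (C₁ * T) * Real.exp (-(C₁⁻¹ * Q)) :=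
          mul_le_mul hcoeff hexp (le_of_lt (Real.exp_pos _)) (by positivity)
    _ = _ := by ring
end

section
/- Let n, d ≥ 1, c > 0 and define ρ(u,z) := u^{1/2} + Σ_{i=1}^n |z_i|^{1/(2i-1)} for u > 0, z ∈ ℝ^{nd}. Then there exists a constant C depending only on n, d, c such that for all u > 0 and z ∈ ℝ^{nd}, u^{-1-n²d/2} exp(−c·u·|𝕋_u^{-1} z|²) ≤ C / ρ(u,z)^{n²d+2}. -/
open scoped BigOperators

/-- The parabolic quasi-norm ρ(u,z) = u^{1/2} + Σ_{i=1}^n |z_i|^{1/(2i-1)}. -/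
noncomputable def rho0 (n d : ℕ) (u : ℝ) (z : Fin n → EuclideanSpace ℝ (Fin d)) : ℝ :=
  |u| ^ ((1:ℝ)/2) + ∑ i : Fin n, ‖z i‖ ^ ((1:ℝ) / (2 * (i:ℕ) + 1))

lemma aux1 (A c : ℝ) (hA : 0 < A) (hc : 0 < c) :
    ∀ t : ℝ, 0 < t → t ^ A * Real.exp (-(c * t)) ≤ Real.exp (A * Real.log (A / c) - A) := by
  intro t ht
  rw [← Real.exp_log (Real.rpow_pos_of_pos ht A), Real.log_rpow ht, ← Real.exp_add]
  apply Real.exp_le_exp.mpr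
  have h1 : Real.log (t * (c / A)) ≤ t * (c / A) - 1 :=
    Real.log_le_sub_one_of_pos (by positivity)
  rw [Real.log_mul (ne_of_gt ht) (by positivity)] at h1
  have h2 : Real.log (A / c) = - Real.log (c / A) := by
    rw [← Real.log_inv]; congr 1; field_simp
  rw [h2]
  have h3 := mul_le_mul_of_nonneg_left h1 hA.le
  have hAc : A * (t * (c / A)) = c * t := by field_simp
  nlinarith [h3]

lemma aux2 (A c : ℝ) (hA : 0 < A) (hc : 0 < c) :
    ∃ C : ℝ, 0 < C ∧ ∀ a : ℝ, 0 < a → a ≤ A → ∀ t : ℝ, 0 < t →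
      t ^ a * Real.exp (-(c * t)) ≤ C := by
  refine ⟨max 1 (Real.exp (A * Real.log (A / c) - A)), lt_max_of_lt_left one_pos, ?_⟩
  intro a ha haA t ht
  rcases le_total t 1 with h | h
  · have h1 : t ^ a ≤ 1 := Real.rpow_le_one ht.le h ha.le
    have h2 : Real.exp (-(c*t)) ≤ 1 := by rw [Real.exp_le_one_iff]; nlinarith
    have := mul_le_mul h1 h2 (Real.exp_nonneg _) zero_le_one
    simpa using this.trans (le_max_left _ _)
  · have h1 : t ^ a * Real.exp (-(c*t)) ≤ t ^ A * Real.exp (-(c*t)) :=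
      mul_le_mul_of_nonneg_right (Real.rpow_le_rpow_of_exponent_le h haA) (Real.exp_nonneg _)
    exact h1.trans (le_trans (aux1 A c hA hc t ht) (le_max_right _ _))

/-- Conversion of the time-singular Gaussian bound into the Calderón–Zygmund
pointwise bound in the quasi-metric ρ:
u^{-1-n²d/2} exp(−c u |𝕋_u^{-1}z|²) ≤ C / ρ(u,z)^{n²d+2}. -/
theorem stmt_5 (n d : ℕ) (hn : 1 ≤ n) (hd : 1 ≤ d) (c : ℝ) (hc : 0 < c) :
    ∃ C : ℝ, 0 < C ∧ ∀ (u : ℝ), 0 < u → ∀ z : Fin n → EuclideanSpace ℝ (Fin d),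
      u ^ (-(1:ℝ) - ((n ^ 2 * d : ℕ) : ℝ) / 2) *
        Real.exp (-(c * u * ∑ i : Fin n, (‖z i‖ / u ^ ((i:ℕ) + 1)) ^ 2))
      ≤ C / (rho0 n d u z) ^ (((n ^ 2 * d : ℕ) : ℝ) + 2) := by
  set Nr : ℝ := ((n ^ 2 * d : ℕ) : ℝ) with hNrdef
  have hNr0 : (0:ℝ) ≤ Nr := Nat.cast_nonneg _
  obtain ⟨C0, hC00, hC0⟩ := aux2 ((Nr + 2)/2) c (by positivity) hc
  refine ⟨((n:ℝ)+1) ^ (Nr+2) * max 1 C0, by positivity, ?_⟩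
  intro u hu z
  set ρ := rho0 n d u z with hρdef
  have hu' : |u| = u := abs_of_pos hu
  have hsum0 : 0 ≤ ∑ i : Fin n, ‖z i‖ ^ ((1:ℝ) / (2 * (i:ℕ) + 1)) :=
    Finset.sum_nonneg fun i _ => Real.rpow_nonneg (norm_nonneg _) _
  have hρ0 : 0 < ρ := by
    have h1 : 0 < |u| ^ ((1:ℝ)/2) := Real.rpow_pos_of_pos (by rw [hu']; exact hu) _
    rw [hρdef, rho0]; linarith
  rw [le_div_iff₀ (Real.rpow_pos_of_pos hρ0 _)]
  have hexp0 : ∀ E : ℝ, 0 ≤ Real.exp E := fun E => (Real.exp_pos E).le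
  have key : ρ ≤ ((n:ℝ)+1) * |u| ^ ((1:ℝ)/2) ∨
      ∃ i : Fin n, ρ ≤ ((n:ℝ)+1) * ‖z i‖ ^ ((1:ℝ) / (2 * (i:ℕ) + 1)) := by
    by_contra hcon
    push_neg at hcon
    obtain ⟨h1, h2⟩ := hcon
    have hne : (Finset.univ : Finset (Fin n)).Nonempty :=
      Finset.univ_nonempty_iff.mpr (Fin.pos_iff_nonempty.mp hn)
    have hs : ∑ i : Fin n, ((n:ℝ)+1) * ‖z i‖ ^ ((1:ℝ) / (2 * (i:ℕ) + 1)) <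
        ∑ _i : Fin n, ρ :=
      Finset.sum_lt_sum_of_nonempty hne (fun i _ => h2 i)
    rw [Finset.sum_const, Finset.card_univ, Fintype.card_fin, nsmul_eq_mul] at hs
    rw [← Finset.mul_sum] at hs
    have hρeq : ((n:ℝ)+1) * ρ = ((n:ℝ)+1) * |u| ^ ((1:ℝ)/2) +
        ((n:ℝ)+1) * ∑ i : Fin n, ‖z i‖ ^ ((1:ℝ) / (2 * (i:ℕ) + 1)) := by
      rw [hρdef, rho0]; ring
    nlinarith [hs, h1]
  rcases key with hA | ⟨i, hB⟩
  · -- time-dominant case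
    have h4 : ρ ^ (Nr+2) ≤ ((n:ℝ)+1) ^ (Nr+2) * u ^ ((1/2)*(Nr+2)) := by
      have := Real.rpow_le_rpow hρ0.le hA (by positivity : (0:ℝ) ≤ Nr+2)
      rwa [Real.mul_rpow (by positivity) (by positivity), hu',
        ← Real.rpow_mul hu.le] at this
    have hex : Real.exp (-(c * u * ∑ i : Fin n, (‖z i‖ / u ^ ((i:ℕ) + 1)) ^ 2)) ≤ 1 := by
      rw [Real.exp_le_one_iff]
      have h5 : 0 ≤ ∑ i : Fin n, (‖z i‖ / u ^ ((i:ℕ) + 1)) ^ 2 :=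
        Finset.sum_nonneg fun i _ => sq_nonneg _
      have : 0 ≤ c * u * ∑ i : Fin n, (‖z i‖ / u ^ ((i:ℕ) + 1)) ^ 2 := by positivity
      linarith
    have hupos : (0:ℝ) ≤ u ^ (-(1:ℝ) - Nr / 2) := (Real.rpow_pos_of_pos hu _).le
    have step : u ^ (-(1:ℝ) - Nr / 2) *
        Real.exp (-(c * u * ∑ i : Fin n, (‖z i‖ / u ^ ((i:ℕ) + 1)) ^ 2)) * ρ ^ (Nr+2)
        ≤ (u ^ (-(1:ℝ) - Nr / 2) * 1) * (((n:ℝ)+1) ^ (Nr+2) * u ^ ((1/2)*(Nr+2))) :=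
      mul_le_mul (mul_le_mul_of_nonneg_left hex hupos) h4
        (Real.rpow_nonneg hρ0.le _) (by positivity)
    refine step.trans ?_
    have hval : (u ^ (-(1:ℝ) - Nr / 2) * 1) * (((n:ℝ)+1) ^ (Nr+2) * u ^ ((1/2)*(Nr+2)))
        = ((n:ℝ)+1) ^ (Nr+2) * (u ^ (-(1:ℝ) - Nr / 2) * u ^ ((1/2)*(Nr+2))) := by ring
    rw [hval, ← Real.rpow_add hu, show (-(1:ℝ) - Nr / 2) + (1/2)*(Nr+2) = 0 by ring,
      Real.rpow_zero, mul_one]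
    exact le_mul_of_one_le_right (by positivity) (le_max_left _ _)
  · -- space-dominant case
    set w : ℝ := 2 * ((i:ℕ):ℝ) + 1 with hwdef
    have hw0 : (0:ℝ) < w := by positivity
    have hz : 0 < ‖z i‖ := by
      rcases (norm_nonneg (z i)).lt_or_eq with h | h
      · exact h
      · exfalso
        rw [← h, Real.zero_rpow (by positivity : (1:ℝ)/w ≠ 0), mul_zero] at hB
        exact absurd hB (not_le.mpr hρ0)
    set a : ℝ := (Nr+2)/(2*w) with hadef
    have ha : 0 < a := by positivity
    have haA : a ≤ (Nr+2)/2 := by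
      apply div_le_div_of_nonneg_left (by positivity) (by norm_num)
      nlinarith [Nat.cast_nonneg (α := ℝ) (i:ℕ)]
    set t : ℝ := u * (‖z i‖ / u ^ ((i:ℕ) + 1)) ^ 2 with htdef
    have ht : 0 < t := by positivity
    have hex : Real.exp (-(c * u * ∑ j : Fin n, (‖z j‖ / u ^ ((j:ℕ) + 1)) ^ 2))
        ≤ Real.exp (-(c * t)) := by
      apply Real.exp_le_exp.mpr
      apply neg_le_neg
      have hterm : (‖z i‖ / u ^ ((i:ℕ) + 1)) ^ 2 ≤ ∑ j : Fin n, (‖z j‖ / u ^ ((j:ℕ) + 1)) ^ 2 :=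
        Finset.single_le_sum (f := fun j : Fin n => (‖z j‖ / u ^ ((j:ℕ) + 1)) ^ 2)
          (fun j _ => sq_nonneg _) (Finset.mem_univ i)
      calc c * t = (c * u) * (‖z i‖ / u ^ ((i:ℕ) + 1)) ^ 2 := by rw [htdef]; ring
        _ ≤ (c * u) * ∑ j : Fin n, (‖z j‖ / u ^ ((j:ℕ) + 1)) ^ 2 :=
            mul_le_mul_of_nonneg_left hterm (by positivity)
        _ = c * u * ∑ j : Fin n, (‖z j‖ / u ^ ((j:ℕ) + 1)) ^ 2 := by ring
    have ht_eq : t = ‖z i‖ ^ (2:ℝ) / u ^ w := by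
      have h1 : ‖z i‖ ^ (2:ℝ) = ‖z i‖ ^ (2:ℕ) := by
        rw [show (2:ℝ) = ((2:ℕ):ℝ) by norm_num, Real.rpow_natCast]
      have h2 : u ^ w = u ^ (2*(i:ℕ)+1 : ℕ) := by
        rw [show w = ((2*(i:ℕ)+1 : ℕ):ℝ) by rw [hwdef]; push_cast; ring, Real.rpow_natCast]
      rw [h1, h2, htdef]
      field_simp
      ring
    have htpow : u ^ (-(1:ℝ) - Nr / 2) * (‖z i‖ ^ ((1:ℝ)/w)) ^ (Nr+2) = t ^ a := by
      rw [ht_eq, Real.div_rpow (by positivity) (by positivity),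
        ← Real.rpow_mul (norm_nonneg _), ← Real.rpow_mul hu.le,
        ← Real.rpow_mul (norm_nonneg _)]
      have e1 : (1:ℝ)/w*(Nr+2) = 2*a := by rw [hadef]; field_simp
      have e2 : (-(1:ℝ) - Nr/2) = -(w*a) := by rw [hadef]; field_simp; ring
      rw [e1, e2, Real.rpow_neg hu.le, div_eq_mul_inv]
      ring
    have h4 : ρ ^ (Nr+2) ≤ ((n:ℝ)+1) ^ (Nr+2) * (‖z i‖ ^ ((1:ℝ)/w)) ^ (Nr+2) := by
      have := Real.rpow_le_rpow hρ0.le hB (by positivity : (0:ℝ) ≤ Nr+2)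
      rwa [Real.mul_rpow (by positivity) (by positivity)] at this
    have hupos : (0:ℝ) ≤ u ^ (-(1:ℝ) - Nr / 2) := (Real.rpow_pos_of_pos hu _).le
    have step : u ^ (-(1:ℝ) - Nr / 2) *
        Real.exp (-(c * u * ∑ j : Fin n, (‖z j‖ / u ^ ((j:ℕ) + 1)) ^ 2)) * ρ ^ (Nr+2)
        ≤ (u ^ (-(1:ℝ) - Nr / 2) * Real.exp (-(c * t))) *
          (((n:ℝ)+1) ^ (Nr+2) * (‖z i‖ ^ ((1:ℝ)/w)) ^ (Nr+2)) :=
      mul_le_mul (mul_le_mul_of_nonneg_left hex hupos) h4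
        (Real.rpow_nonneg hρ0.le _) (by positivity)
    refine step.trans ?_
    have hval : (u ^ (-(1:ℝ) - Nr / 2) * Real.exp (-(c * t))) *
        (((n:ℝ)+1) ^ (Nr+2) * (‖z i‖ ^ ((1:ℝ)/w)) ^ (Nr+2))
        = ((n:ℝ)+1) ^ (Nr+2) *
          ((u ^ (-(1:ℝ) - Nr / 2) * (‖z i‖ ^ ((1:ℝ)/w)) ^ (Nr+2)) * Real.exp (-(c * t))) := by
      ring
    rw [hval, htpow]
    have h5 : t ^ a * Real.exp (-(c * t)) ≤ C0 := hC0 a ha haA t ht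
    calc ((n:ℝ)+1) ^ (Nr+2) * (t ^ a * Real.exp (-(c * t)))
        ≤ ((n:ℝ)+1) ^ (Nr+2) * C0 := mul_le_mul_of_nonneg_left h5 (by positivity)
      _ ≤ ((n:ℝ)+1) ^ (Nr+2) * max 1 C0 :=
          mul_le_mul_of_nonneg_left (le_max_right _ _) (by positivity)
end

section
/- Let F : [0,T] × ℝ^{nd} → ℝ^{nd} be continuous in space, measurable in time, and globally Lipschitz in space with constant κ uniformly in time. For x, y ∈ ℝ^{nd} and 0 ≤ u < v ≤ T, let θ_{·,u}(x) be the flow of θ' = F(r,θ) started at x at time u, and θ_{·,v}(y) the flow started at y at time v (run backward to u). Let w ≥ v − u and 𝕋_w = diag(w·I_d,…,wⁿ·I_d). Assume additionally the structural bound |𝕋_w^{-1}(F(r,a) − F(r,b))| ≤ κ w^{-1} |𝕋_w^{-1}(a−b)| for all r ∈ [u,v], a, b ∈ ℝ^{nd}. Then e^{-κ} |𝕋_w^{-1}(x − θ_{u,v}(y))| ≤ |𝕋_w^{-1}(θ_{v,u}(x) − y)| ≤ e^{κ} |𝕋_w^{-1}(x − θ_{u,v}(y))|. -/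
/-!
The scaled difference `φ r = 𝕋_w⁻¹ (θ_{r,u}(x) - θ_{r,v}(y))` of the two solutions satisfies
`‖φ'‖ ≤ (κ / w) ‖φ‖` by the structural bound. Gronwall's lemma, run forward and backward over
`[u, v]`, compares `‖φ v‖` and `‖φ u‖` up to the factor `exp (κ (v - u) / w) ≤ exp κ`.
-/

open Set Real

section Gronwall

variable {E : Type*} [NormedAddCommGroup E] [NormedSpace ℝ E]

theorem norm_le_exp_mul_norm_of_norm_deriv_le {φ φ' : ℝ → E} {a b K : ℝ} (hab : a ≤ b)
    (hφ : ∀ r ∈ Icc a b, HasDerivAt φ (φ' r) r) (hbound : ∀ r ∈ Icc a b, ‖φ' r‖ ≤ K * ‖φ r‖) :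
    ‖φ b‖ ≤ exp (K * (b - a)) * ‖φ a‖ := by
  have hcont : ContinuousOn φ (Icc a b) := fun r hr => (hφ r hr).continuousAt.continuousWithinAt
  have := norm_le_gronwallBound_of_norm_deriv_right_le hcont
    (fun r hr => (hφ r (Ico_subset_Icc_self hr)).hasDerivWithinAt) le_rfl
    (fun r hr => (hbound r (Ico_subset_Icc_self hr)).trans_eq (add_zero _).symm) b
    (right_mem_Icc.2 hab)
  rwa [gronwallBound_ε0, mul_comm] at this

-- Gronwall applied to the reflection `r ↦ φ (a + b - r)`.
theorem norm_le_exp_mul_norm_of_norm_deriv_le_rev {φ φ' : ℝ → E} {a b K : ℝ} (hab : a ≤ b)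
    (hφ : ∀ r ∈ Icc a b, HasDerivAt φ (φ' r) r) (hbound : ∀ r ∈ Icc a b, ‖φ' r‖ ≤ K * ‖φ r‖) :
    ‖φ a‖ ≤ exp (K * (b - a)) * ‖φ b‖ := by
  have hmem : ∀ r ∈ Icc a b, a + b - r ∈ Icc a b := fun r hr =>
    ⟨by linarith [hr.2], by linarith [hr.1]⟩
  have hψ : ∀ r ∈ Icc a b, HasDerivAt (fun s => φ (a + b - s)) (-φ' (a + b - r)) r := by
    intro r hr
    simpa [Function.comp_def] using
      (hφ _ (hmem r hr)).scomp r ((hasDerivAt_id r).const_sub (a + b))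
  simpa using norm_le_exp_mul_norm_of_norm_deriv_le hab hψ
    (fun r hr => by simpa using hbound _ (hmem r hr))

variable {G : Type*} [NormedAddCommGroup G] [NormedSpace ℝ G]

theorem norm_map_sub_solutions_le (D : E →L[ℝ] G) {F : ℝ → E → E} {θx θy : ℝ → E}
    {u v K : ℝ} (huv : u ≤ v)
    (hx : ∀ r ∈ Icc u v, HasDerivAt θx (F r (θx r)) r)
    (hy : ∀ r ∈ Icc u v, HasDerivAt θy (F r (θy r)) r)
    (hF : ∀ r ∈ Icc u v, ∀ a b, ‖D (F r a - F r b)‖ ≤ K * ‖D (a - b)‖) :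
    ‖D (θx v - θy v)‖ ≤ exp (K * (v - u)) * ‖D (θx u - θy u)‖ ∧
      ‖D (θx u - θy u)‖ ≤ exp (K * (v - u)) * ‖D (θx v - θy v)‖ := by
  have hφ : ∀ r ∈ Icc u v,
      HasDerivAt (fun s => D (θx s - θy s)) (D (F r (θx r) - F r (θy r))) r := fun r hr =>
    D.hasFDerivAt.comp_hasDerivAt r ((hx r hr).sub (hy r hr))
  have hbound : ∀ r ∈ Icc u v,
      ‖D (F r (θx r) - F r (θy r))‖ ≤ K * ‖D (θx r - θy r)‖ := fun r hr => hF r hr (θx r) (θy r)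
  exact ⟨norm_le_exp_mul_norm_of_norm_deriv_le huv hφ hbound,
    norm_le_exp_mul_norm_of_norm_deriv_le_rev huv hφ hbound⟩

end Gronwall

theorem norm_toEuclideanCLM_diagonal {ι : Type*} [Fintype ι] [DecidableEq ι] (c : ι → ℝ)
    (a : EuclideanSpace ℝ ι) :
    ‖Matrix.toEuclideanCLM (𝕜 := ℝ) (Matrix.diagonal c) a‖ = √(∑ p, (c p * a p) ^ 2) := by
  simp [EuclideanSpace.norm_eq, Matrix.mulVec_diagonal, ← abs_mul, sq_abs]

theorem stmt_8_general (n d : ℕ) (u v w κ : ℝ) (huv : u < v)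
    (hw : v - u ≤ w) (hw0 : 0 < w) (hκ : 0 ≤ κ)
    (F : ℝ → EuclideanSpace ℝ (Fin n × Fin d) → EuclideanSpace ℝ (Fin n × Fin d))
    (x y : EuclideanSpace ℝ (Fin n × Fin d))
    (θx θy : ℝ → EuclideanSpace ℝ (Fin n × Fin d))
    (hx0 : θx u = x) (hy0 : θy v = y)
    (hxode : ∀ r ∈ Set.Icc u v, HasDerivAt θx (F r (θx r)) r)
    (hyode : ∀ r ∈ Set.Icc u v, HasDerivAt θy (F r (θy r)) r)
    (hstruct : ∀ r ∈ Set.Icc u v, ∀ a b : EuclideanSpace ℝ (Fin n × Fin d),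
      Real.sqrt (∑ p : Fin n × Fin d, ((w ^ ((p.1:ℕ) + 1))⁻¹ * (F r a - F r b) p) ^ 2)
        ≤ κ / w * Real.sqrt (∑ p : Fin n × Fin d, ((w ^ ((p.1:ℕ) + 1))⁻¹ * (a - b) p) ^ 2)) :
    Real.exp (-κ) *
        Real.sqrt (∑ p : Fin n × Fin d, ((w ^ ((p.1:ℕ) + 1))⁻¹ * (x - θy u) p) ^ 2)
      ≤ Real.sqrt (∑ p : Fin n × Fin d, ((w ^ ((p.1:ℕ) + 1))⁻¹ * (θx v - y) p) ^ 2) ∧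
    Real.sqrt (∑ p : Fin n × Fin d, ((w ^ ((p.1:ℕ) + 1))⁻¹ * (θx v - y) p) ^ 2)
      ≤ Real.exp κ *
        Real.sqrt (∑ p : Fin n × Fin d, ((w ^ ((p.1:ℕ) + 1))⁻¹ * (x - θy u) p) ^ 2) := by
  set D := Matrix.toEuclideanCLM (𝕜 := ℝ) (Matrix.diagonal fun p : Fin n × Fin d =>
    (w ^ ((p.1 : ℕ) + 1))⁻¹)
  simp only [← norm_toEuclideanCLM_diagonal] at hstruct ⊢
  obtain ⟨hforward, hbackward⟩ := norm_map_sub_solutions_le D huv.le hxode hyode hstruct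
  rw [hx0, hy0] at hforward hbackward
  have hexp : exp (κ / w * (v - u)) ≤ exp κ := by
    gcongr
    calc κ / w * (v - u) ≤ κ / w * w := by gcongr
      _ = κ := div_mul_cancel₀ κ hw0.ne'
  constructor
  · rw [exp_neg, inv_mul_le_iff₀ (exp_pos κ)]
    exact hbackward.trans (by gcongr)
  · exact hforward.trans (by gcongr)

/-- Equivalence of forward and backward scaled flows: under a scaled Lipschitz bound on F
with scale matrix 𝕋_w (w ≥ v−u), one has
e^{-κ}|𝕋_w^{-1}(x − θ_{u,v}(y))| ≤ |𝕋_w^{-1}(θ_{v,u}(x) − y)| ≤ e^{κ}|𝕋_w^{-1}(x − θ_{u,v}(y))|. -/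
theorem stmt_8 (n d : ℕ) (T u v w κ : ℝ) (hu : 0 ≤ u) (huv : u < v) (hvT : v ≤ T)
    (hw : v - u ≤ w) (hw0 : 0 < w) (hκ : 0 ≤ κ)
    (F : ℝ → EuclideanSpace ℝ (Fin n × Fin d) → EuclideanSpace ℝ (Fin n × Fin d))
    (hFc : ∀ r, Continuous (F r))
    (hLip : ∀ r a b, ‖F r a - F r b‖ ≤ κ * ‖a - b‖)
    (x y : EuclideanSpace ℝ (Fin n × Fin d))
    (θx θy : ℝ → EuclideanSpace ℝ (Fin n × Fin d))
    (hx0 : θx u = x) (hy0 : θy v = y)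
    (hxode : ∀ r ∈ Set.Icc u v, HasDerivAt θx (F r (θx r)) r)
    (hyode : ∀ r ∈ Set.Icc u v, HasDerivAt θy (F r (θy r)) r)
    (hstruct : ∀ r ∈ Set.Icc u v, ∀ a b : EuclideanSpace ℝ (Fin n × Fin d),
      Real.sqrt (∑ p : Fin n × Fin d, ((w ^ ((p.1:ℕ) + 1))⁻¹ * (F r a - F r b) p) ^ 2)
        ≤ κ / w * Real.sqrt (∑ p : Fin n × Fin d, ((w ^ ((p.1:ℕ) + 1))⁻¹ * (a - b) p) ^ 2)) :
    Real.exp (-κ) *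
        Real.sqrt (∑ p : Fin n × Fin d, ((w ^ ((p.1:ℕ) + 1))⁻¹ * (x - θy u) p) ^ 2)
      ≤ Real.sqrt (∑ p : Fin n × Fin d, ((w ^ ((p.1:ℕ) + 1))⁻¹ * (θx v - y) p) ^ 2) ∧
    Real.sqrt (∑ p : Fin n × Fin d, ((w ^ ((p.1:ℕ) + 1))⁻¹ * (θx v - y) p) ^ 2)
      ≤ Real.exp κ *
        Real.sqrt (∑ p : Fin n × Fin d, ((w ^ ((p.1:ℕ) + 1))⁻¹ * (x - θy u) p) ^ 2) :=
  stmt_8_general n d u v w κ huv hw hw0 hκ F x y θx θy hx0 hy0 hxode hyode hstruct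
end

section
/- Let (X_t)_{t∈[s,T]} be a continuous ℝ^{nd}-valued process with X_t = x + ∫_s^t F(u,X_u) du + ∫_s^t B σ(u,X_u) dW_u, where F is Lipschitz in space with constant κ uniformly in time, B = (I_d,0,…,0)^*, and σ is bounded by Λ^{1/2}. Let θ_{t,s}(x) be the flow of θ̇ = F. Then |X_t − θ_{t,s}(x)| ≤ e^{κ(T−s)} sup_{u∈[s,t]} |∫_s^u B σ(v,X_v) dW_v| for all t ∈ [s,T], and consequently for every δ > 0 and h ∈ (0, T−s], P[ sup_{t∈[s,s+h]} |X_t − θ_{t,s}(x)| ≥ δ ] ≤ 2d exp( − δ² / (2 d Λ h e^{2κ(T−s)}) ). -/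
/-!
Subtracting the characteristic equation from the integral equation, `X - θ` is driven by the
drift difference, which is `κ`-Lipschitz in `X - θ`, plus the martingale part `M`; Gronwall's
inequality then gives `‖X_t - θ_t‖ ≤ e^{κ(T-s)} sup_{[s,t]} ‖M‖`. Hence if the deviation reaches
`δ` before time `s + h`, one of the `d` nonzero coordinates of `M` reaches
`a = δ / (√d e^{κ(T-s)})` in absolute value. For a coordinate `Z` and `l = a / (Λ h)`, the
supermartingale `exp (l Z_t - l² Λ (t - s) / 2)` must then exceed `exp (a² / (2 Λ h))`, which by
Ville's maximal inequality (optional stopping on dyadic grids, then continuity of paths) has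
probability at most `exp (-a² / (2 Λ h))`; a union bound over `d` coordinates and two signs
concludes.
-/

open MeasureTheory Set Filter Topology Real

lemma add_mul_gronwallBound_zero (S K x : ℝ) :
    S + K * gronwallBound 0 K S x = S * exp (K * x) := by
  rcases eq_or_ne K 0 with rfl | hK
  · simp
  · rw [gronwallBound_of_K_ne_0 hK]
    field_simp
    ring

theorem le_mul_exp_of_le_add_mul_integral {g : ℝ → ℝ} (hg : Continuous g) {s t S K : ℝ}
    (hK : 0 ≤ K) (hst : s ≤ t) (hle : ∀ u ∈ Icc s t, g u ≤ S + K * ∫ v in s..u, g v) :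
    g t ≤ S * exp (K * (t - s)) := by
  set G : ℝ → ℝ := fun u => ∫ v in s..u, g v
  have hG : ∀ u, HasDerivAt G (g u) u := fun u => hg.integral_hasStrictDerivAt s u |>.hasDerivAt
  have hGt : G t ≤ gronwallBound 0 K S (t - s) :=
    le_gronwallBound_of_liminf_deriv_right_le (fun u _ => (hG u).continuousAt.continuousWithinAt)
      (fun u _ _ hr => (hG u).hasDerivWithinAt.liminf_right_slope_le hr) (by simp [G])
      (fun u hu => by linarith [hle u (Ico_subset_Icc_self hu)]) t ⟨hst, le_rfl⟩
  calc g t ≤ S + K * G t := hle t ⟨hst, le_rfl⟩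
    _ ≤ S + K * gronwallBound 0 K S (t - s) := by gcongr
    _ = S * exp (K * (t - s)) := add_mul_gronwallBound_zero S K _

section Perturbation

variable {E : Type*} [NormedAddCommGroup E] [NormedSpace ℝ E] [CompleteSpace E]
  {F : ℝ → E → E} {κ s T : ℝ} {θ Y : ℝ → E}

lemma intervalIntegrable_along_solution_of_lipschitz (hLip : ∀ r a b, ‖F r a - F r b‖ ≤ κ * ‖a - b‖)
    (hθ : ∀ u ∈ Icc s T, HasDerivAt θ (F u (θ u)) u) (hY : ContinuousOn Y (Icc s T))
    {t : ℝ} (ht : t ∈ Icc s T) (hFY : IntervalIntegrable (fun u => F u (Y u)) volume s t) :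
    IntervalIntegrable (fun u => F u (θ u)) volume s t := by
  have hsub : Ioc s t ⊆ Icc s T := fun v hv => ⟨hv.1.le, hv.2.trans ht.2⟩
  rw [intervalIntegrable_iff_integrableOn_Ioc_of_le ht.1] at hFY ⊢
  have hθY : IntegrableOn (fun v => κ * ‖θ v - Y v‖) (Ioc s t) :=
    (ContinuousOn.integrableOn_compact isCompact_Icc (continuousOn_const.mul
      ((HasDerivAt.continuousOn hθ |>.sub hY).norm))).mono_set hsub
  -- `F u (θ u)` is measurable in `u` because it coincides with `deriv θ` on `[s, T]`.
  have hmeas : AEStronglyMeasurable (fun v => F v (θ v)) (volume.restrict (Ioc s t)) :=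
    (stronglyMeasurable_deriv θ).aestronglyMeasurable.congr <|
      (ae_restrict_iff' measurableSet_Ioc).2 <| .of_forall fun v hv => (hθ v (hsub hv)).deriv
  refine (hFY.norm.add hθY).mono' hmeas <| (ae_restrict_iff' measurableSet_Ioc).2 <|
    .of_forall fun v _ => ?_
  calc ‖F v (θ v)‖ ≤ ‖F v (Y v)‖ + ‖F v (θ v) - F v (Y v)‖ := norm_le_insert' _ _
    _ ≤ ‖F v (Y v)‖ + κ * ‖θ v - Y v‖ := by gcongr; exact hLip v _ _

theorem norm_sub_le_exp_mul_iSup_of_eq_add_integral (hκ : 0 ≤ κ)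
    (hLip : ∀ r a b, ‖F r a - F r b‖ ≤ κ * ‖a - b‖) {x : E} (hθ0 : θ s = x)
    (hθ : ∀ u ∈ Icc s T, HasDerivAt θ (F u (θ u)) u) {N : ℝ → E}
    (hY : ContinuousOn Y (Icc s T)) (hN : ContinuousOn N (Icc s T)) (hN0 : N s = 0)
    (hFY : ∀ t ∈ Icc s T, IntervalIntegrable (fun u => F u (Y u)) volume s t)
    (hYeq : ∀ t ∈ Icc s T, Y t = x + (∫ u in s..t, F u (Y u)) + N t)
    {t : ℝ} (ht : t ∈ Icc s T) :
    ‖Y t - θ t‖ ≤ exp (κ * (T - s)) * ⨆ u : Icc s t, ‖N u‖ := by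
  have hsub : Icc s t ⊆ Icc s T := Icc_subset_Icc le_rfl ht.2
  set S := ⨆ u : Icc s t, ‖N u‖
  have hNS : ∀ u ∈ Icc s t, ‖N u‖ ≤ S :=
    fun u hu => le_ciSup_set (isCompact_Icc.bddAbove_image (hN.mono hsub).norm) hu
  have hS : 0 ≤ S := by simpa [hN0] using hNS s ⟨le_rfl, ht.1⟩
  have hdiff : ∀ u ∈ Icc s t, Y u - θ u = (∫ v in s..u, F v (Y v) - F v (θ v)) + N u := by
    intro u hu
    have hFθ := intervalIntegrable_along_solution_of_lipschitz hLip hθ hY (hsub hu)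
      (hFY u (hsub hu))
    have hθu : ∫ v in s..u, F v (θ v) = θ u - x := by
      rw [← hθ0]
      refine intervalIntegral.integral_eq_sub_of_hasDerivAt (fun v hv => hθ v ?_) hFθ
      rw [uIcc_of_le hu.1] at hv
      exact ⟨hv.1, hv.2.trans (hsub hu).2⟩
    rw [intervalIntegral.integral_sub (hFY u (hsub hu)) hFθ, hθu, hYeq u (hsub hu)]
    abel
  set g : ℝ → ℝ := IccExtend ht.1 fun u => ‖Y u - θ u‖
  have hg : Continuous g := continuous_IccExtend_iff.2 <|
    (hY.sub (HasDerivAt.continuousOn hθ)).norm.mono hsub |>.domRestrict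
  have hg_eq : ∀ u ∈ Icc s t, g u = ‖Y u - θ u‖ := fun u hu => IccExtend_of_mem ht.1 _ hu
  have hgle : ∀ u ∈ Icc s t, g u ≤ S + κ * ∫ v in s..u, g v := by
    intro u hu
    have hint : ‖∫ v in s..u, F v (Y v) - F v (θ v)‖ ≤ ∫ v in s..u, κ * g v := by
      refine intervalIntegral.norm_integral_le_of_norm_le hu.1 (.of_forall fun v hv => ?_)
        ((continuous_const.mul hg).intervalIntegrable s u)
      rw [hg_eq v ⟨hv.1.le, hv.2.trans hu.2⟩]
      exact hLip v _ _
    rw [intervalIntegral.integral_const_mul] at hint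
    calc g u = ‖(∫ v in s..u, F v (Y v) - F v (θ v)) + N u‖ := by rw [hg_eq u hu, hdiff u hu]
      _ ≤ ‖∫ v in s..u, F v (Y v) - F v (θ v)‖ + ‖N u‖ := norm_add_le _ _
      _ ≤ κ * (∫ v in s..u, g v) + S := add_le_add hint (hNS u hu)
      _ = S + κ * ∫ v in s..u, g v := add_comm _ _
  calc ‖Y t - θ t‖ = g t := (hg_eq t ⟨ht.1, le_rfl⟩).symm
    _ ≤ S * exp (κ * (t - s)) := le_mul_exp_of_le_add_mul_integral hg hκ ht.1 hgle
    _ ≤ exp (κ * (T - s)) * S := by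
      rw [mul_comm]; gcongr; exact ht.2

end Perturbation

lemma IsCompact.exists_le_of_le_iSup {α : Type*} [TopologicalSpace α] {K : Set α}
    (hK : IsCompact K) (hne : K.Nonempty) {f : α → ℝ} (hf : ContinuousOn f K) {c : ℝ}
    (hc : c ≤ ⨆ u : K, f u) : ∃ u ∈ K, c ≤ f u := by
  obtain ⟨u, hu, hmax⟩ := hK.exists_isMaxOn hne hf
  have := hne.to_subtype
  exact ⟨u, hu, hc.trans (ciSup_le fun v => hmax v.2)⟩

lemma EuclideanSpace.exists_le_abs_of_sqrt_card_mul_le_norm {ι : Type*} [Fintype ι]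
    {v : EuclideanSpace ℝ ι} {S : Finset ι} (hv : ∀ i ∉ S, v i = 0) (hS : S.Nonempty) {a : ℝ}
    (h : √S.card * a ≤ ‖v‖) : ∃ i ∈ S, a ≤ |v i| := by
  by_contra! hlt
  obtain ⟨i₀, hi₀⟩ := hS
  have ha : 0 < a := (abs_nonneg _).trans_lt (hlt i₀ hi₀)
  have hlt_sq : ‖v‖ ^ 2 < S.card * a ^ 2 := by
    rw [EuclideanSpace.real_norm_sq_eq,
      ← Finset.sum_subset (Finset.subset_univ S) fun i _ hi => by simp [hv i hi]]
    calc ∑ i ∈ S, v i ^ 2 < ∑ _i ∈ S, a ^ 2 :=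
          Finset.sum_lt_sum_of_nonempty ⟨i₀, hi₀⟩ fun i hi => by
            rw [← sq_abs]; exact pow_lt_pow_left₀ (hlt i hi) (abs_nonneg _) two_ne_zero
      _ = S.card * a ^ 2 := by simp
  have hle_sq := pow_le_pow_left₀ (by positivity) h 2
  rw [mul_pow, sq_sqrt (Nat.cast_nonneg _)] at hle_sq
  linarith

lemma exists_le_abs_apply_of_le_mul_iSup_norm {n d : ℕ} (hd : 1 ≤ d) (p₀ : Fin n)
    {N : ℝ → EuclideanSpace ℝ (Fin n × Fin d)} (hN : ∀ t p, p.1 ≠ p₀ → N t p = 0) {s t : ℝ}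
    (hst : s ≤ t) (hNc : ContinuousOn N (Icc s t)) {δ e : ℝ} (he : 0 < e)
    (hδ : δ ≤ e * ⨆ u : Icc s t, ‖N u‖) : ∃ u ∈ Icc s t, ∃ j, δ / (√d * e) ≤ |N u (p₀, j)| := by
  have hd' : (0 : ℝ) < √d := sqrt_pos.2 (by exact_mod_cast hd)
  obtain ⟨u, hu, hδu⟩ := isCompact_Icc.exists_le_of_le_iSup (nonempty_Icc.2 hst) hNc.norm
    (c := δ / e) (by rwa [div_le_iff₀' he])
  obtain ⟨p, hp, hδp⟩ := EuclideanSpace.exists_le_abs_of_sqrt_card_mul_le_norm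
    (S := {p₀} ×ˢ Finset.univ) (v := N u) (a := δ / (√d * e))
    (fun p hp => hN u p fun h =>
      hp (Finset.mem_product.2 ⟨Finset.mem_singleton.2 h, Finset.mem_univ _⟩))
    (by simp [Fin.pos_iff_nonempty.mp hd])
    (by convert hδu using 1; simp only [Finset.card_product, Finset.card_singleton,
      Finset.card_univ, Fintype.card_fin, one_mul]; field_simp)
  simp only [Finset.mem_product, Finset.mem_singleton] at hp
  exact ⟨u, hu, p.2, by rwa [← hp.1]⟩

-- Clamped at `b` so that the grid is a monotone sequence of times indexed by all of `ℕ`.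
noncomputable def dyadicGrid (a b : ℝ) (n i : ℕ) : ℝ := min (a + (b - a) * i / 2 ^ n) b

section DyadicGrid

variable {a b : ℝ}

lemma dyadicGrid_monotone (hab : a ≤ b) (n : ℕ) : Monotone (dyadicGrid a b n) := by
  intro i j hij
  have : 0 ≤ b - a := sub_nonneg.2 hab
  unfold dyadicGrid
  gcongr

lemma dyadicGrid_zero (hab : a ≤ b) (n : ℕ) : dyadicGrid a b n 0 = a := by
  simp [dyadicGrid, hab]

lemma dyadicGrid_succ_two_mul (n i : ℕ) :
    dyadicGrid a b (n + 1) (2 * i) = dyadicGrid a b n i := by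
  unfold dyadicGrid
  congr 1
  push_cast
  field_simp
  ring

lemma dyadicGrid_mem (hab : a ≤ b) (n i : ℕ) : dyadicGrid a b n i ∈ Icc a b := by
  have : 0 ≤ b - a := sub_nonneg.2 hab
  exact ⟨le_min (le_add_of_nonneg_right (by positivity)) hab, min_le_right _ _⟩

lemma floor_mul_two_pow_le {t : ℝ} (hab : a < b) (ht : t ∈ Icc a b) (n : ℕ) :
    ⌊(t - a) / (b - a) * 2 ^ n⌋₊ ≤ 2 ^ n := by
  refine Nat.floor_le_of_le ?_
  push_cast
  refine mul_le_of_le_one_left (by positivity) ?_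
  rw [div_le_one (sub_pos.2 hab)]
  linarith [ht.2]

lemma tendsto_dyadicGrid_floor (hab : a < b) {t : ℝ} (ht : t ∈ Icc a b) :
    Tendsto (fun n => dyadicGrid a b n ⌊(t - a) / (b - a) * 2 ^ n⌋₊) atTop (𝓝 t) := by
  set r := (t - a) / (b - a)
  have hba : 0 < b - a := sub_pos.2 hab
  have hr : (b - a) * r = t - a := mul_div_cancel₀ _ hba.ne'
  have hr0 : 0 ≤ r := div_nonneg (sub_nonneg.2 ht.1) hba.le
  have hbounds : ∀ n : ℕ, t - (b - a) / 2 ^ n ≤ dyadicGrid a b n ⌊r * 2 ^ n⌋₊ ∧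
      dyadicGrid a b n ⌊r * 2 ^ n⌋₊ ≤ t := by
    intro n
    have h2 : (0 : ℝ) < 2 ^ n := by positivity
    have hfl := Nat.floor_le (by positivity : 0 ≤ r * 2 ^ n)
    have hfl' := Nat.lt_floor_add_one (r * 2 ^ n)
    have hle : a + (b - a) * ⌊r * 2 ^ n⌋₊ / 2 ^ n ≤ t := by
      rw [← le_sub_iff_add_le', div_le_iff₀ h2, ← hr]
      nlinarith
    unfold dyadicGrid
    rw [min_eq_left (hle.trans ht.2)]
    refine ⟨?_, hle⟩
    rw [sub_le_iff_le_add, add_assoc, ← add_div, ← sub_le_iff_le_add', le_div_iff₀ h2, ← hr]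
    nlinarith
  refine tendsto_of_tendsto_of_tendsto_of_le_of_le ?_ tendsto_const_nhds
    (fun n => (hbounds n).1) (fun n => (hbounds n).2)
  simpa using (tendsto_const_nhds (x := t)).sub <| (tendsto_const_nhds (x := b - a)).div_atTop
    (tendsto_pow_atTop_atTop_of_one_lt one_lt_two)

end DyadicGrid

namespace MeasureTheory

variable {Ω : Type*} {m : MeasurableSpace Ω} {P : Measure Ω}

theorem Supermartingale.measure_exists_ge_le_of_nonneg [IsFiniteMeasure P] {𝒢 : Filtration ℕ m}
    {Z : ℕ → Ω → ℝ} (hZ : Supermartingale Z 𝒢 P) (hnonneg : ∀ i ω, 0 ≤ Z i ω) {c : ℝ}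
    (hc : 0 < c) (k : ℕ) :
    P {ω | ∃ i ≤ k, c ≤ Z i ω} ≤ ENNReal.ofReal ((∫ ω, Z 0 ω ∂P) / c) := by
  set τ : Ω → WithTop ℕ := fun ω => (hittingBtwn Z (Ici c) 0 k ω : ℕ)
  have hτ : IsStoppingTime 𝒢 τ :=
    hZ.stronglyAdapted.adapted.isStoppingTime_hittingBtwn measurableSet_Ici
  have hτk : ∀ ω, τ ω ≤ k := fun ω => WithTop.coe_le_coe.2 (hittingBtwn_le ω)
  have hsub : {ω | ∃ i ≤ k, c ≤ Z i ω} ⊆ {ω | c ≤ stoppedValue Z τ ω} :=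
    fun ω ⟨i, hik, hi⟩ => stoppedValue_hittingBtwn_mem ⟨i, ⟨Nat.zero_le _, hik⟩, hi⟩
  have hstop : ∫ ω, stoppedValue Z τ ω ∂P ≤ ∫ ω, Z 0 ω ∂P := by
    have := hZ.neg.expected_stoppedValue_mono (isStoppingTime_const 𝒢 0) hτ
      (fun ω => WithTop.coe_le_coe.2 (Nat.zero_le _)) hτk
    simpa [stoppedValue, integral_neg] using this
  have hint : Integrable (stoppedValue Z τ) P := by
    simpa [stoppedValue] using (hZ.neg.integrable_stoppedValue hτ hτk).neg
  have hmarkov := mul_meas_ge_le_integral_of_nonneg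
    (.of_forall fun ω => hnonneg _ ω : 0 ≤ᵐ[P] stoppedValue Z τ) hint c
  rw [ENNReal.le_ofReal_iff_toReal_le (measure_ne_top _ _)
    (div_nonneg (integral_nonneg (hnonneg 0)) hc.le), le_div_iff₀ hc]
  calc P.real {ω | ∃ i ≤ k, c ≤ Z i ω} * c ≤ c * P.real {ω | c ≤ stoppedValue Z τ ω} := by
        rw [mul_comm]; gcongr; exact measure_ne_top P _
    _ ≤ _ := hmarkov.trans hstop

def Filtration.sample {ι : Type*} [Preorder ι] (ℱ : Filtration ι m) {τ : ℕ → ι}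
    (hτ : Monotone τ) : Filtration ℕ m :=
  ⟨fun i => ℱ (τ i), fun _ _ hij => ℱ.mono (hτ hij), fun _ => ℱ.le _⟩

lemma Supermartingale.comp_monotone {ι : Type*} [Preorder ι] {ℱ : Filtration ι m}
    {Y : ι → Ω → ℝ} (hY : Supermartingale Y ℱ P) {τ : ℕ → ι} (hτ : Monotone τ) :
    Supermartingale (fun i => Y (τ i)) (ℱ.sample hτ) P :=
  ⟨fun i => hY.stronglyAdapted (τ i), fun _ _ hij => hY.2.1 _ _ (hτ hij),
    fun _ => hY.integrable _⟩

theorem Supermartingale.measure_exists_ge_le_of_continuousOn [IsFiniteMeasure P]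
    {ℱ : Filtration ℝ m} {Y : ℝ → Ω → ℝ} (hY : Supermartingale Y ℱ P)
    (hnonneg : ∀ t ω, 0 ≤ Y t ω) {a b : ℝ} (hab : a < b)
    (hYc : ∀ ω, ContinuousOn (fun t => Y t ω) (Icc a b)) {c : ℝ} (hc : 0 < c) :
    P {ω | ∃ t ∈ Icc a b, c ≤ Y t ω} ≤ ENNReal.ofReal ((∫ ω, Y a ω ∂P) / c) := by
  set A : ℝ → ℕ → Set Ω := fun c' n => {ω | ∃ i ≤ 2 ^ n, c' ≤ Y (dyadicGrid a b n i) ω}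
  have hA : ∀ c' > 0, ∀ n, P (A c' n) ≤ ENNReal.ofReal ((∫ ω, Y a ω ∂P) / c') := by
    intro c' hc' n
    simpa [dyadicGrid_zero hab.le] using
      (hY.comp_monotone (dyadicGrid_monotone hab.le n)).measure_exists_ge_le_of_nonneg
        (fun _ _ => hnonneg _ _) hc' (2 ^ n)
  have hA_mono : ∀ c', Monotone (A c') := fun c' =>
    monotone_nat_of_le_succ fun n ω ⟨i, hi, h⟩ =>
      ⟨2 * i, by rw [pow_succ]; omega, by rwa [dyadicGrid_succ_two_mul]⟩
  -- a path reaching `c` at time `t` exceeds `c' < c` at dyadic times close to `t`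
  have hcover : ∀ c' < c, {ω | ∃ t ∈ Icc a b, c ≤ Y t ω} ⊆ ⋃ n, A c' n := by
    rintro c' hc' ω ⟨t, ht, hct⟩
    have hlim := (hYc ω t ht).tendsto.comp <| tendsto_nhdsWithin_iff.2
      ⟨tendsto_dyadicGrid_floor hab ht, .of_forall fun n => dyadicGrid_mem hab.le n _⟩
    obtain ⟨n, hn⟩ := (hlim.eventually (lt_mem_nhds (hc'.trans_le hct))).exists
    exact mem_iUnion.2 ⟨n, _, floor_mul_two_pow_le hab ht n, hn.le⟩
  have hbound : ∀ c' ∈ Ioo 0 c,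
      P {ω | ∃ t ∈ Icc a b, c ≤ Y t ω} ≤ ENNReal.ofReal ((∫ ω, Y a ω ∂P) / c') :=
    fun c' hc' => (measure_mono (hcover c' hc'.2)).trans <|
      (hA_mono c').measure_iUnion.trans_le (iSup_le (hA c' hc'.1))
  refine ge_of_tendsto ?_ (eventually_of_mem (Ioo_mem_nhdsLT hc) hbound)
  exact (ENNReal.continuous_ofReal.tendsto _).comp
    ((tendsto_const_nhds.div tendsto_id hc.ne').mono_left nhdsWithin_le_nhds)

-- The exponential supermartingales that `Z = ∫ σ dW` has when `‖σ‖² ≤ Λ`.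
def IsExpSupermartingale (ℱ : Filtration ℝ m) (P : Measure Ω) (Λ s : ℝ) (Z : ℝ → Ω → ℝ) :
    Prop :=
  ∀ l : ℝ, Supermartingale (fun t ω => exp (l * Z t ω - l ^ 2 * Λ * (t - s) / 2)) ℱ P

namespace IsExpSupermartingale

variable {ℱ : Filtration ℝ m} {Λ s h : ℝ} {Z : ℝ → Ω → ℝ}

lemma neg (hZ : IsExpSupermartingale ℱ P Λ s Z) : IsExpSupermartingale ℱ P Λ s (-Z) :=
  fun l => by simpa using hZ (-l)

theorem measure_exists_ge_le [IsProbabilityMeasure P] (hZ : IsExpSupermartingale ℱ P Λ s Z)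
    (hΛ : 0 < Λ) (hh : 0 < h) (hZc : ∀ ω, ContinuousOn (fun t => Z t ω) (Icc s (s + h)))
    (hZ0 : ∀ ω, Z s ω = 0) {a : ℝ} (ha : 0 ≤ a) :
    P {ω | ∃ t ∈ Icc s (s + h), a ≤ Z t ω} ≤ ENNReal.ofReal (exp (-(a ^ 2) / (2 * Λ * h))) := by
  set l := a / (Λ * h)
  have hl : 0 ≤ l := by positivity
  have hexponent : l * a - l ^ 2 * Λ * h / 2 = a ^ 2 / (2 * Λ * h) := by
    simp only [l]
    field_simp
    ring
  have hsub : {ω | ∃ t ∈ Icc s (s + h), a ≤ Z t ω} ⊆ {ω | ∃ t ∈ Icc s (s + h),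
      exp (a ^ 2 / (2 * Λ * h)) ≤ exp (l * Z t ω - l ^ 2 * Λ * (t - s) / 2)} := by
    rintro ω ⟨t, ht, hat⟩
    refine ⟨t, ht, exp_le_exp.2 ?_⟩
    have : l ^ 2 * Λ * (t - s) ≤ l ^ 2 * Λ * h := by gcongr; linarith [ht.2]
    rw [← hexponent]
    linarith [mul_le_mul_of_nonneg_left hat hl]
  calc _ ≤ _ := measure_mono hsub
    _ ≤ _ := (hZ l).measure_exists_ge_le_of_continuousOn (fun _ _ => (exp_pos _).le)
      (lt_add_of_pos_right s hh) (fun ω => ((continuousOn_const.mul (hZc ω)).sub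
        (by fun_prop)).rexp) (exp_pos _)
    _ = ENNReal.ofReal (exp (-(a ^ 2) / (2 * Λ * h))) := by
      simp [hZ0, neg_div, exp_neg]

theorem measure_exists_le_abs_le [IsProbabilityMeasure P] (hZ : IsExpSupermartingale ℱ P Λ s Z)
    (hΛ : 0 < Λ) (hh : 0 < h) (hZc : ∀ ω, ContinuousOn (fun t => Z t ω) (Icc s (s + h)))
    (hZ0 : ∀ ω, Z s ω = 0) {a : ℝ} (ha : 0 ≤ a) :
    P {ω | ∃ t ∈ Icc s (s + h), a ≤ |Z t ω|} ≤
      2 * ENNReal.ofReal (exp (-(a ^ 2) / (2 * Λ * h))) := by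
  have hsub : {ω | ∃ t ∈ Icc s (s + h), a ≤ |Z t ω|} ⊆
      {ω | ∃ t ∈ Icc s (s + h), a ≤ Z t ω} ∪ {ω | ∃ t ∈ Icc s (s + h), a ≤ (-Z) t ω} := by
    rintro ω ⟨t, ht, hat⟩
    rcases le_abs.1 hat with h | h
    exacts [.inl ⟨t, ht, h⟩, .inr ⟨t, ht, h⟩]
  calc _ ≤ _ := (measure_mono hsub).trans (measure_union_le _ _)
    _ ≤ _ := add_le_add (hZ.measure_exists_ge_le hΛ hh hZc hZ0 ha)
      (hZ.neg.measure_exists_ge_le hΛ hh (fun ω => (hZc ω).neg) (by simp [hZ0]) ha)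
    _ = _ := (two_mul _).symm

end IsExpSupermartingale

end MeasureTheory

theorem stmt_16_general (n d : ℕ) (hn : 1 ≤ n) (hd : 1 ≤ d) (s T κ Λ : ℝ)
    (hκ : 0 ≤ κ) (hΛ : 0 < Λ)
    {Ω : Type} [m : MeasurableSpace Ω] (P : Measure Ω) [IsProbabilityMeasure P]
    (ℱ : Filtration ℝ m)
    (F : ℝ → EuclideanSpace ℝ (Fin n × Fin d) → EuclideanSpace ℝ (Fin n × Fin d))
    (hLip : ∀ r a b, ‖F r a - F r b‖ ≤ κ * ‖a - b‖)
    (x : EuclideanSpace ℝ (Fin n × Fin d))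
    (θ : ℝ → EuclideanSpace ℝ (Fin n × Fin d))
    (hθ0 : θ s = x)
    (hθode : ∀ u ∈ Set.Icc s T, HasDerivAt θ (F u (θ u)) u)
    (X M : ℝ → Ω → EuclideanSpace ℝ (Fin n × Fin d))
    (hXc : ∀ ω, ContinuousOn (fun u => X u ω) (Set.Icc s T))
    (hMc : ∀ ω, ContinuousOn (fun u => M u ω) (Set.Icc s T))
    (hM0 : ∀ ω, M s ω = 0)
    (hMblock : ∀ t ω (p : Fin n × Fin d), (p.1 : ℕ) ≠ 0 → M t ω p = 0)
    (hint : ∀ ω, ∀ t ∈ Set.Icc s T, IntervalIntegrable (fun u => F u (X u ω)) volume s t)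
    (hdecomp : ∀ ω, ∀ t ∈ Set.Icc s T, X t ω = x + (∫ u in s..t, F u (X u ω)) + M t ω)
    (hexp : ∀ (j : Fin d) (l : ℝ),
      Supermartingale
        (fun (t : ℝ) (ω : Ω) =>
          Real.exp (l * M t ω (⟨0, hn⟩, j) - l ^ 2 * Λ * (t - s) / 2)) ℱ P) :
    (∀ ω, ∀ t ∈ Set.Icc s T,
      ‖X t ω - θ t‖ ≤ Real.exp (κ * (T - s)) * ⨆ u : Set.Icc s t, ‖M (u : ℝ) ω‖) ∧
    (∀ δ h : ℝ, 0 < δ → 0 < h → h ≤ T - s →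
      P {ω | ∃ t ∈ Set.Icc s (s + h), δ ≤ ‖X t ω - θ t‖} ≤
        ENNReal.ofReal
          (2 * d * Real.exp (-(δ ^ 2) / (2 * d * Λ * h * Real.exp (2 * κ * (T - s)))))) := by
  have hpath : ∀ ω, ∀ t ∈ Icc s T,
      ‖X t ω - θ t‖ ≤ exp (κ * (T - s)) * ⨆ u : Icc s t, ‖M (u : ℝ) ω‖ := fun ω _ ht =>
    norm_sub_le_exp_mul_iSup_of_eq_add_integral hκ hLip hθ0 hθode (hXc ω) (hMc ω) (hM0 ω)
      (hint ω) (hdecomp ω) ht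
  refine ⟨hpath, fun δ h hδ hh hhT => ?_⟩
  set e := exp (κ * (T - s))
  set a := δ / (√d * e)
  have hd' : (0 : ℝ) < d := by exact_mod_cast hd
  have hcover : {ω | ∃ t ∈ Icc s (s + h), δ ≤ ‖X t ω - θ t‖} ⊆
      ⋃ j : Fin d, {ω | ∃ t ∈ Icc s (s + h), a ≤ |M t ω (⟨0, hn⟩, j)|} := by
    rintro ω ⟨t, ht, hδt⟩
    have htT : t ∈ Icc s T := ⟨ht.1, by linarith [ht.2]⟩
    obtain ⟨u, hu, j, hj⟩ := exists_le_abs_apply_of_le_mul_iSup_norm hd ⟨0, hn⟩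
      (fun t p hp => hMblock t ω p fun h => hp (Fin.ext h)) ht.1
      ((hMc ω).mono (Icc_subset_Icc_right htT.2)) (exp_pos _) (hδt.trans (hpath ω t htT))
    exact mem_iUnion.2 ⟨j, u, ⟨hu.1, hu.2.trans ht.2⟩, hj⟩
  have hexponent : a ^ 2 / (2 * Λ * h) = δ ^ 2 / (2 * d * Λ * h * exp (2 * κ * (T - s))) := by
    have he : exp (2 * κ * (T - s)) = e ^ 2 := by rw [← exp_nat_mul]; ring_nf
    simp only [a, he, div_pow, mul_pow, sq_sqrt hd'.le]
    field_simp
  calc _ ≤ ∑ j : Fin d, P {ω | ∃ t ∈ Icc s (s + h), a ≤ |M t ω (⟨0, hn⟩, j)|} :=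
        (measure_mono hcover).trans (measure_iUnion_fintype_le _ _)
    _ ≤ ∑ _j : Fin d, 2 * ENNReal.ofReal (exp (-(a ^ 2) / (2 * Λ * h))) :=
        Finset.sum_le_sum fun j _ => IsExpSupermartingale.measure_exists_le_abs_le (hexp j) hΛ hh
          (fun ω => ((EuclideanSpace.proj _).continuous.comp_continuousOn
            ((hMc ω).mono (Icc_subset_Icc_right (by linarith)))))
          (fun ω => by simp [hM0]) (by positivity)
    _ = _ := by
      rw [neg_div, hexponent, ← neg_div, Finset.sum_const, Finset.card_univ, Fintype.card_fin,
        nsmul_eq_mul, ← ENNReal.ofReal_natCast, ← ENNReal.ofReal_ofNat 2,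
        ← ENNReal.ofReal_mul (by norm_num), ← ENNReal.ofReal_mul (by positivity)]
      ring_nf

/-- Deviation of the SDE from its characteristic: pathwise Gronwall bound
|X_t − θ_{t,s}(x)| ≤ e^{κ(T−s)} sup_{u∈[s,t]}|M_u| (M the martingale part, supported in the
first block), and the Bernstein tail estimate
P[sup_{[s,s+h]}|X − θ| ≥ δ] ≤ 2d exp(−δ²/(2dΛh e^{2κ(T−s)})), under the exponential
supermartingale property of the components of M (encoding that M = ∫ Bσ dW with |σ|² ≤ Λ). -/
theorem stmt_16 (n d : ℕ) (hn : 1 ≤ n) (hd : 1 ≤ d) (s T κ Λ : ℝ)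
    (hsT : s < T) (hκ : 0 ≤ κ) (hΛ : 0 < Λ)
    {Ω : Type} [m : MeasurableSpace Ω] (P : Measure Ω) [IsProbabilityMeasure P]
    (ℱ : Filtration ℝ m)
    (F : ℝ → EuclideanSpace ℝ (Fin n × Fin d) → EuclideanSpace ℝ (Fin n × Fin d))
    (hLip : ∀ r a b, ‖F r a - F r b‖ ≤ κ * ‖a - b‖)
    (x : EuclideanSpace ℝ (Fin n × Fin d))
    (θ : ℝ → EuclideanSpace ℝ (Fin n × Fin d))
    (hθ0 : θ s = x)
    (hθode : ∀ u ∈ Set.Icc s T, HasDerivAt θ (F u (θ u)) u)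
    (X M : ℝ → Ω → EuclideanSpace ℝ (Fin n × Fin d))
    (hXc : ∀ ω, ContinuousOn (fun u => X u ω) (Set.Icc s T))
    (hMc : ∀ ω, ContinuousOn (fun u => M u ω) (Set.Icc s T))
    (hM0 : ∀ ω, M s ω = 0)
    (hMblock : ∀ t ω (p : Fin n × Fin d), (p.1 : ℕ) ≠ 0 → M t ω p = 0)
    (hint : ∀ ω, ∀ t ∈ Set.Icc s T, IntervalIntegrable (fun u => F u (X u ω)) volume s t)
    (hdecomp : ∀ ω, ∀ t ∈ Set.Icc s T, X t ω = x + (∫ u in s..t, F u (X u ω)) + M t ω)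
    (hexp : ∀ (j : Fin d) (l : ℝ),
      Supermartingale
        (fun (t : ℝ) (ω : Ω) =>
          Real.exp (l * M t ω (⟨0, hn⟩, j) - l ^ 2 * Λ * (t - s) / 2)) ℱ P) :
    (∀ ω, ∀ t ∈ Set.Icc s T,
      ‖X t ω - θ t‖ ≤ Real.exp (κ * (T - s)) * ⨆ u : Set.Icc s t, ‖M (u : ℝ) ω‖) ∧
    (∀ δ h : ℝ, 0 < δ → 0 < h → h ≤ T - s →
      P {ω | ∃ t ∈ Set.Icc s (s + h), δ ≤ ‖X t ω - θ t‖} ≤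
        ENNReal.ofReal
          (2 * d * Real.exp (-(δ ^ 2) / (2 * d * Λ * h * Real.exp (2 * κ * (T - s)))))) :=
  stmt_16_general n d hn hd s T κ Λ hκ hΛ (m := m) P ℱ F hLip x θ hθ0 hθode X M hXc hMc hM0 hMblock
    hint hdecomp hexp
end
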